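/- On a bicontinuous poset P, the interval topology is Hausdorff. -/
import Mathlib


/-- A nonempty subset in which any two elements have an upper bound in the set. -/
def IsDirectedSet {P : Type*} [PartialOrder P] (S : Set P) : Prop :=
  S.Nonempty ∧ ∀ x ∈ S, ∀ y ∈ S, ∃ z ∈ S, x ≤ z ∧ y ≤ z

/-- A nonempty subset in which any two elements have a lower bound in the set. -/
def IsFilteredSet {P : Type*} [PartialOrder P] (S : Set P) : Prop :=
  S.Nonempty ∧ ∀ x ∈ S, ∀ y ∈ S, ∃ z ∈ S, z ≤ x ∧ z ≤ y

/-- `WayBelow x y` (`x ≪ y`): for every directed set `S` that has a supremum `s`,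
`y ≤ s` implies `x ≤ a` for some `a ∈ S`. -/
def WayBelow {P : Type*} [PartialOrder P] (x y : P) : Prop :=
  ∀ S : Set P, IsDirectedSet S → ∀ s, IsLUB S s → y ≤ s → ∃ a ∈ S, x ≤ a

/-- `↡x = {a | a ≪ x}`. -/
def waydown {P : Type*} [PartialOrder P] (x : P) : Set P := {a | WayBelow a x}

/-- `↟x = {a | x ≪ a}`. -/
def wayup {P : Type*} [PartialOrder P] (x : P) : Set P := {a | WayBelow x a}

/-- A poset is continuous if every `↡x` contains a directed set with supremum `x`. -/
def IsContinuousPoset (P : Type*) [PartialOrder P] : Prop :=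
  ∀ x : P, ∃ S : Set P, S ⊆ waydown x ∧ IsDirectedSet S ∧ IsLUB S x

/-- A continuous poset is bicontinuous if `≪` has the dual characterization via
filtered infima and each `↟x` is filtered with infimum `x`. -/
def IsBicontinuousPoset (P : Type*) [PartialOrder P] : Prop :=
  IsContinuousPoset P ∧
  (∀ x y : P, WayBelow x y ↔
    ∀ S : Set P, IsFilteredSet S → ∀ i, IsGLB S i → i ≤ x → ∃ s ∈ S, s ≤ y) ∧
  (∀ x : P, IsFilteredSet (wayup x) ∧ IsGLB (wayup x) x)

/-- Scott open: an upper set inaccessible by directed suprema. -/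
def IsScottOpen {P : Type*} [PartialOrder P] (U : Set P) : Prop :=
  (∀ x ∈ U, ∀ y, x ≤ y → y ∈ U) ∧
  ∀ S : Set P, IsDirectedSet S → ∀ s, IsLUB S s → s ∈ U → (S ∩ U).Nonempty

/-- The way-below open interval `(a,b) = {x | a ≪ x ≪ b}`. -/
def wayInterval {P : Type*} [PartialOrder P] (a b : P) : Set P :=
  {x | WayBelow a x ∧ WayBelow x b}

/-- The interval topology on a (bicontinuous) poset: generated by the sets `(a,b)`. -/
def intervalTop (P : Type*) [PartialOrder P] : TopologicalSpace P :=
  TopologicalSpace.generateFrom {U : Set P | ∃ a b : P, U = wayInterval a b}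


lemma wayBelow_le {P : Type*} [PartialOrder P] {x y : P} (h : WayBelow x y) : x ≤ y := by
  obtain ⟨a, ha, hxa⟩ := h {y} ⟨⟨y, rfl⟩, fun u hu v hv => ⟨y, rfl, by simp_all, by simp_all⟩⟩ y
    isLUB_singleton le_rfl
  rw [Set.mem_singleton_iff] at ha; exact ha ▸ hxa

/-- On a bicontinuous poset, the interval topology is Hausdorff. -/
theorem interval_t2 {P : Type*} [PartialOrder P] (hP : IsBicontinuousPoset P) :
    @T2Space P (intervalTop P) := by
  obtain ⟨hc, hdual, hup⟩ := hP
  letI := intervalTop P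
  have hopen : ∀ a b : P, IsOpen (wayInterval a b) := fun a b =>
    TopologicalSpace.GenerateOpen.basic _ ⟨a, b, rfl⟩
  have key : ∀ x y : P, ¬ x ≤ y →
      ∃ U V : Set P, IsOpen U ∧ IsOpen V ∧ x ∈ U ∧ y ∈ V ∧ Disjoint U V := by
    intro x y hxy
    obtain ⟨S, hS, hSd, hSl⟩ := hc x
    have h1 : ∃ a ∈ S, ¬ a ≤ y := by
      by_contra h; push_neg at h
      exact hxy (hSl.2 fun s hs => h s hs)
    obtain ⟨a, haS, hay⟩ := h1
    have ha : WayBelow a x := hS haS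
    obtain ⟨hfil, hglb⟩ := hup y
    have h2 : ∃ b ∈ wayup y, ¬ a ≤ b := by
      by_contra h; push_neg at h
      exact hay (hglb.2 fun s hs => h s hs)
    obtain ⟨b, hb, hab⟩ := h2
    obtain ⟨c, hc'⟩ := (hup x).1.1
    obtain ⟨Sy, hSy, hSyd, _⟩ := hc y
    obtain ⟨d, hd⟩ := hSyd.1
    refine ⟨wayInterval a c, wayInterval d b, hopen a c, hopen d b, ⟨ha, hc'⟩, ⟨hSy hd, hb⟩, ?_⟩
    rw [Set.disjoint_left]
    rintro z ⟨haz, _⟩ ⟨_, hzb⟩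
    exact hab ((wayBelow_le haz).trans (wayBelow_le hzb))
  constructor
  intro x y hxy
  have hle : ¬ x ≤ y ∨ ¬ y ≤ x := by
    by_contra h; push_neg at h; exact hxy (le_antisymm h.1 h.2)
  rcases hle with h | h
  · obtain ⟨U, V, hU, hV, hxU, hyV, hd⟩ := key x y h
    exact ⟨U, V, hU, hV, hxU, hyV, hd⟩
  · obtain ⟨U, V, hU, hV, hyU, hxV, hd⟩ := key y x h
    exact ⟨V, U, hV, hU, hxV, hyU, hd.symm⟩
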